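/- arXiv:1307.7994 — 3 statements merged into one kernel-verified Lean document; each statement's English description precedes it below -/
import Mathlib

section
/- Let B be an order-convex subset of ∂([0,k₁]×⋯×[0,kₙ]) \ {(k₁,…,kₙ)} containing (0,…,0), where ∂ denotes the topological boundary of the box, i.e., the complement of the open box ]0,k₁[×⋯×]0,kₙ[. Then B is contractible. -/
/-!
Push a point `x` of `B` away from the corner `k` along the ray from `k` until it reaches a face
of the box through `0`, then scale it down to `0`. Both straight-line moves stay in the boundary
of the box and below `x`, so order-convexity between `0 ∈ B` and `x` keeps them inside `B`.
-/

open Set Convex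

theorem ContinuousMap.Homotopic.of_segment_subset {X E : Type*} [TopologicalSpace X]
    [AddCommGroup E] [TopologicalSpace E] [IsTopologicalAddGroup E] [Module ℝ E]
    [ContinuousSMul ℝ E] {s : Set E} {f g : C(X, s)} (h : ∀ x, [(f x : E) -[ℝ] g x] ⊆ s) :
    f.Homotopic g :=
  ⟨{ toFun := fun p => ⟨Path.segment (f p.2 : E) (g p.2) p.1,
        h p.2 (Path.range_segment (f p.2 : E) (g p.2) ▸ mem_range_self p.1)⟩
     continuous_toFun := (Homotopy.affine ⟨fun x => (f x : E), by fun_prop⟩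
        ⟨fun x => (g x : E), by fun_prop⟩).continuous.subtype_mk _
     map_zero_left := fun x => by simp
     map_one_left := fun x => by simp }⟩

theorem Pi.apply_mem_segment {𝕜 ι : Type*} {E : ι → Type*} [Semiring 𝕜] [PartialOrder 𝕜]
    [∀ i, AddCommMonoid (E i)] [∀ i, SMul 𝕜 (E i)] {z x y : ∀ i, E i} (h : z ∈ [x -[𝕜] y])
    (i : ι) : z i ∈ [x i -[𝕜] y i] := by
  obtain ⟨a, b, ha, hb, hab, rfl⟩ := h
  exact ⟨a, b, ha, hb, hab, rfl⟩

variable {ι : Type*} (k : ι → ℝ)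

def openBox : Set (ι → ℝ) := {x | ∀ i, x i ∈ Ioo 0 (k i)}

theorem Icc_zero_diff_openBox_subset {x : ι → ℝ} (hxk : x ≤ k) (hx : x ≠ k) :
    Icc 0 x \ openBox k ⊆ (Icc 0 k \ openBox k) \ {k} := by
  rintro z ⟨⟨hz0, hzx⟩, hzb⟩
  refine ⟨⟨⟨hz0, hzx.trans hxk⟩, hzb⟩, ?_⟩
  rintro rfl
  exact hx (le_antisymm hxk hzx)

variable [Fintype ι] [Nonempty ι]

noncomputable def cornerRatio (x : ι → ℝ) : ℝ :=
  Finset.univ.sup' Finset.univ_nonempty fun i => (k i - x i) / k i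

/-- The point where the ray from the corner `k` through `x` meets a face of the box through `0`. -/
noncomputable def lowerFaceProj (x : ι → ℝ) : ι → ℝ :=
  k - (cornerRatio k x)⁻¹ • (k - x)

variable {k} {x : ι → ℝ}

theorem lowerFaceProj_apply (i : ι) :
    lowerFaceProj k x i = k i - (cornerRatio k x)⁻¹ * (k i - x i) := rfl

theorem sub_le_cornerRatio_mul (hx : x ∈ Icc 0 k) (i : ι) :
    k i - x i ≤ cornerRatio k x * k i := by
  obtain hk | hk := (show (0 : ℝ) ≤ k i from (hx.1 i).trans (hx.2 i)).eq_or_lt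
  · have hxi : x i = 0 := le_antisymm (hk ▸ hx.2 i) (hx.1 i)
    simp [← hk, hxi]
  · exact (div_le_iff₀ hk).1 (Finset.le_sup' (fun j => (k j - x j) / k j) (Finset.mem_univ i))

theorem cornerRatio_pos (hx : x ∈ Icc 0 k \ {k}) : 0 < cornerRatio k x := by
  obtain ⟨j, hj⟩ := (Pi.lt_def.1 (lt_of_le_of_ne hx.1.2 hx.2)).2
  exact (div_pos (sub_pos.2 hj) ((hx.1.1 j).trans_lt hj)).trans_le
    (Finset.le_sup' (fun i => (k i - x i) / k i) (Finset.mem_univ j))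

theorem cornerRatio_le_one (hx : x ∈ Icc 0 k) : cornerRatio k x ≤ 1 :=
  Finset.sup'_le _ _ fun i _ =>
    div_le_one_of_le₀ (sub_le_self _ (hx.1 i)) ((hx.1 i).trans (hx.2 i))

theorem lowerFaceProj_nonneg (hx : x ∈ Icc 0 k \ {k}) : 0 ≤ lowerFaceProj k x :=
  fun i => by
    rw [Pi.zero_apply, lowerFaceProj_apply, sub_nonneg,
      inv_mul_le_iff₀ (cornerRatio_pos hx)]
    exact sub_le_cornerRatio_mul hx.1 i

theorem lowerFaceProj_le (hx : x ∈ Icc 0 k \ {k}) : lowerFaceProj k x ≤ x :=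
  fun i => by
    have h1 : 1 ≤ (cornerRatio k x)⁻¹ :=
      (one_le_inv₀ (cornerRatio_pos hx)).2 (cornerRatio_le_one hx.1)
    rw [lowerFaceProj_apply]
    nlinarith [hx.1.2 i]

theorem exists_lowerFaceProj_apply_eq_zero (hx : x ∈ Icc 0 k \ {k}) :
    ∃ j, lowerFaceProj k x j = 0 := by
  obtain ⟨j, -, hj⟩ := Finset.exists_mem_eq_sup' Finset.univ_nonempty fun i => (k i - x i) / k i
  have hpos : 0 < (k j - x j) / k j := hj ▸ cornerRatio_pos hx
  refine ⟨j, ?_⟩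
  rw [lowerFaceProj_apply, cornerRatio, hj, inv_div,
    div_mul_cancel₀ _ (div_ne_zero_iff.1 hpos.ne').1, sub_self]

theorem lowerFaceProj_apply_eq_of_notMem (hx : x ∈ Icc 0 k \ {k}) {i : ι}
    (hi : x i ∉ Ioo 0 (k i)) : lowerFaceProj k x i = x i := by
  rcases not_and_or.1 hi with h | h
  · exact le_antisymm (lowerFaceProj_le hx i)
      ((le_antisymm (not_lt.1 h) (hx.1.1 i)) ▸ lowerFaceProj_nonneg hx i)
  · rw [lowerFaceProj_apply, le_antisymm (hx.1.2 i) (not_lt.1 h), sub_self, mul_zero, sub_zero]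

variable (k) in
theorem continuousOn_lowerFaceProj : ContinuousOn (lowerFaceProj k) (Icc 0 k \ {k}) := by
  have hr : Continuous (cornerRatio k) :=
    Continuous.finset_sup'_apply Finset.univ_nonempty fun i _ =>
      (continuous_const.sub (continuous_apply i)).div_const _
  exact continuousOn_const.sub <|
    (hr.continuousOn.inv₀ fun x hx => (cornerRatio_pos hx).ne').smul
      (continuousOn_const.sub continuousOn_id)

theorem segment_lowerFaceProj_subset (hx : x ∈ Icc 0 k \ {k}) (hxb : x ∉ openBox k) :
    [x -[ℝ] lowerFaceProj k x] ⊆ Icc 0 x \ openBox k := by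
  intro z hz
  have hzI : z ∈ Icc (lowerFaceProj k x) x :=
    segment_subset_Icc (lowerFaceProj_le hx) (segment_symm ℝ x _ ▸ hz)
  obtain ⟨i, hi⟩ := not_forall.1 hxb
  have hzi : z i = x i := by
    simpa [lowerFaceProj_apply_eq_of_notMem hx hi] using Pi.apply_mem_segment hz i
  exact ⟨⟨(lowerFaceProj_nonneg hx).trans hzI.1, hzI.2⟩, fun hzb => hi (hzi ▸ hzb i)⟩

theorem segment_lowerFaceProj_zero_subset (hx : x ∈ Icc 0 k \ {k}) :
    [lowerFaceProj k x -[ℝ] 0] ⊆ Icc 0 x \ openBox k := by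
  intro z hz
  have hzI : z ∈ Icc 0 (lowerFaceProj k x) :=
    segment_subset_Icc (lowerFaceProj_nonneg hx) (segment_symm ℝ (lowerFaceProj k x) 0 ▸ hz)
  obtain ⟨j, hj⟩ := exists_lowerFaceProj_apply_eq_zero hx
  have hzj : z j = 0 := by simpa [hj] using Pi.apply_mem_segment hz j
  exact ⟨⟨hzI.1, hzI.2.trans (lowerFaceProj_le hx)⟩, fun hzb => (hzb j).1.ne' hzj⟩

theorem orderConvex_boundary_contractible_general (n : ℕ) (k : Fin n → ℝ) (B : Set (Fin n → ℝ))
    (hBamb : B ⊆ (Set.Icc (0 : Fin n → ℝ) k \ {x | ∀ i, x i ∈ Set.Ioo 0 (k i)}) \ {k})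
    (hconv : ∀ x ∈ B, ∀ y ∈ B,
      ∀ z ∈ (Set.Icc (0 : Fin n → ℝ) k \ {x | ∀ i, x i ∈ Set.Ioo 0 (k i)}) \ {k},
      y ≤ z → z ≤ x → z ∈ B)
    (h0 : (0 : Fin n → ℝ) ∈ B) :
    ContractibleSpace B := by
  have hmem : ∀ x ∈ B, x ∈ Icc 0 k \ {k} := fun x hx => ⟨(hBamb hx).1.1, (hBamb hx).2⟩
  have hdown : ∀ x ∈ B, Icc 0 x \ openBox k ⊆ B := fun x hx z hz =>
    hconv x hx 0 h0 z (Icc_zero_diff_openBox_subset k (hmem x hx).1.2 (hmem x hx).2 hz)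
      hz.1.1 hz.1.2
  have : Nonempty (Fin n) := not_isEmpty_iff.1 fun _ => (hmem 0 h0).2 (Subsingleton.elim _ _)
  let r : C(B, B) :=
    ⟨fun x => ⟨lowerFaceProj k x, hdown x x.2 <|
        segment_lowerFaceProj_zero_subset (hmem x x.2) (left_mem_segment ℝ _ _)⟩,
      ((continuousOn_lowerFaceProj k).comp_continuous continuous_subtype_val
        fun x : B => hmem x x.2).subtype_mk _⟩
  have hid : (ContinuousMap.id B).Homotopic r := .of_segment_subset fun x =>
    (segment_lowerFaceProj_subset (hmem x x.2) (hBamb x.2).1.2).trans (hdown x x.2)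
  have hr : r.Homotopic (.const B ⟨0, h0⟩) := .of_segment_subset fun x =>
    (segment_lowerFaceProj_zero_subset (hmem x x.2)).trans (hdown x x.2)
  exact (contractible_iff_id_nullhomotopic B).2 ⟨_, hid.trans hr⟩

/-- Let `B` be an order-convex subset of
`∂([0,k₁]×⋯×[0,kₙ]) \ {(k₁,…,kₙ)}` containing `(0,…,0)`, where the boundary of
the box is its complement of the open box `]0,k₁[×⋯×]0,kₙ[` in the closed box
(componentwise order on `ℝⁿ`, `kᵢ ≥ 1`). Then `B` is contractible. -/
theorem orderConvex_boundary_contractible (n : ℕ) (k : Fin n → ℝ)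
    (hk : ∀ i, 1 ≤ k i) (B : Set (Fin n → ℝ))
    (hBamb : B ⊆ (Set.Icc (0 : Fin n → ℝ) k \ {x | ∀ i, x i ∈ Set.Ioo 0 (k i)}) \ {k})
    (hconv : ∀ x ∈ B, ∀ y ∈ B,
      ∀ z ∈ (Set.Icc (0 : Fin n → ℝ) k \ {x | ∀ i, x i ∈ Set.Ioo 0 (k i)}) \ {k},
      y ≤ z → z ≤ x → z ∈ B)
    (h0 : (0 : Fin n → ℝ) ∈ B) :
    ContractibleSpace B :=
  orderConvex_boundary_contractible_general n k B hBamb hconv h0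
end

section
/- Let f : |P| → |Q| be a weak morphism of precubical sets that is a homeomorphism, let X ⊆ P and A ⊆ Q be precubical subsets, and let a ∈ Q. Then: (i) a ∈ f(X) if and only if the carrier c(a) ∈ X; (ii) A ⊆ f(c(A)); (iii) c(f(X)) = X, where f(X) denotes the image precubical subset and c denotes carriers. -/
/-- A graded set with boundary operators: the data of a precubical set.
`cell` is the set of all cubes, `deg` the degree, and `d b i x` the face
`dᵢᵇ x`, meaningful for `1 ≤ i ≤ deg x` (`b = false` is `d⁰`, `b = true` is `d¹`). -/
structure PrecubicalSet where
  cell : Type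
  deg : cell → ℕ
  d : Bool → ℕ → cell → cell

/-- `P` is a genuine precubical set: faces lower degree by one and the
precubical relations `dᵢᵏ ∘ dⱼˡ = dⱼ₋₁ˡ ∘ dᵢᵏ` hold for `i < j`. -/
def PrecubicalSet.IsPrecubical (P : PrecubicalSet) : Prop :=
  (∀ (b : Bool) (i : ℕ) (x : P.cell), 1 ≤ i → i ≤ P.deg x →
      P.deg (P.d b i x) = P.deg x - 1) ∧
  (∀ (b b' : Bool) (i j : ℕ) (x : P.cell), 1 ≤ i → i < j → j ≤ P.deg x →
      P.d b i (P.d b' j x) = P.d b' (j - 1) (P.d b i x))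

/-- A precubical subset: a graded subset stable under the boundary operators. -/
def PrecubicalSet.IsSub (P : PrecubicalSet) (X : Set P.cell) : Prop :=
  ∀ (b : Bool) (i : ℕ) (x : P.cell), 1 ≤ i → i ≤ P.deg x → x ∈ X → P.d b i x ∈ X

/-- A morphism of precubical sets: a degree-preserving map commuting with the
boundary operators (on their meaningful range of indices). -/
structure PrecubicalHom (P Q : PrecubicalSet) where
  map : P.cell → Q.cell
  deg_map : ∀ x, Q.deg (map x) = P.deg x
  d_map : ∀ (b : Bool) (i : ℕ) (x : P.cell), 1 ≤ i → i ≤ P.deg x →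
    map (P.d b i x) = Q.d b i (map x)
open CategoryTheory

noncomputable section
open scoped Classical DirectSum

instance (P : PrecubicalSet) : TopologicalSpace P.cell := ⊥

namespace PrecubicalSet

variable (P : PrecubicalSet)

/-- The disjoint union `⨿ₙ Pₙ × [0,1]ⁿ` (cells carry the discrete topology). -/
def ESpace : Type := Σ x : P.cell, Fin (P.deg x) → unitInterval

instance : TopologicalSpace P.ESpace := by unfold ESpace; infer_instance

/-- The map `δᵢᵇ : [0,1]^m → [0,1]^{m+1}` inserting the coordinate `b` at
position `i` (1-based). -/
def insCoord {m : ℕ} (b : Bool) (i : ℕ) (u : Fin m → unitInterval) :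
    Fin (m + 1) → unitInterval :=
  fun j =>
    if (j : ℕ) + 1 < i then (if h : (j : ℕ) < m then u ⟨j, h⟩ else 0)
    else if (j : ℕ) + 1 = i then (if b then 1 else 0)
    else if h : (j : ℕ) - 1 < m then u ⟨(j : ℕ) - 1, h⟩ else 0

/-- The gluing relation of the geometric realisation:
`(dᵢᵇ x, u) ∼ (x, δᵢᵇ u)`. -/
def RelE : P.ESpace → P.ESpace → Prop := fun a z =>
  ∃ (b : Bool) (i : ℕ), 1 ≤ i ∧ i ≤ P.deg z.1 ∧ a.1 = P.d b i z.1 ∧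
    HEq (insCoord b i a.2) z.2

/-- The geometric realisation `|P|` of a precubical set. -/
def GeomReal : Type := Quot P.RelE

instance : TopologicalSpace P.GeomReal := by unfold GeomReal; infer_instance

/-- The point `[x, u]` of `|P|`. -/
def pt (x : P.cell) (u : Fin (P.deg x) → unitInterval) : P.GeomReal :=
  Quot.mk _ ⟨x, u⟩

end PrecubicalSet

namespace PrecubicalSet

/-- The midpoint `½ ∈ [0,1]`. -/
def half : unitInterval := ⟨1/2, by norm_num⟩

/-- The degree of a cell of the grid: a grid cell assigns to each of the `n`
coordinates either a vertex `j` (`(j, false)`) or an edge `[j, j+1]`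
(`(j, true)`); the degree is the number of edge coordinates. -/
def gridDeg {n : ℕ} (c : Fin n → ℕ × Bool) : ℕ :=
  (Finset.univ.filter fun i => (c i).2 = true).card

/-- The boundary operator of the grid: `dₘᵇ` replaces the `m`-th edge
coordinate `[j, j+1]` by the vertex `j` (`b = false`) or `j+1` (`b = true`). -/
def gridD {n : ℕ} (b : Bool) (m : ℕ) (c : Fin n → ℕ × Bool) : Fin n → ℕ × Bool :=
  fun i =>
    if (c i).2 = true ∧
        (Finset.univ.filter fun i' => (c i').2 = true ∧ i' < i).card + 1 = m
    then ((c i).1 + (if b then 1 else 0), false) else c i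

/-- The precubical set `⟦0,k₁⟧ ⊗ ⋯ ⊗ ⟦0,kₙ⟧`. -/
def BoxData {n : ℕ} (k : Fin n → ℕ) : PrecubicalSet where
  cell := {c : Fin n → ℕ × Bool // ∀ i, (c i).1 + (if (c i).2 then 1 else 0) ≤ k i}
  deg := fun c => gridDeg c.1
  d := fun b m c => ⟨gridD b m c.1, by
    intro i
    dsimp only [gridD]
    split
    · rename_i h
      have h2 := c.2 i
      rw [h.1] at h2
      simp only [if_true] at h2
      cases b <;> simp <;> omega
    · exact c.2 i⟩

/-- The cell of the box `⟦0,k₁⟧ ⊗ ⋯ ⊗ ⟦0,kₙ⟧` in whose relatively open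
realisation a point `t ∈ [0,k₁] × ⋯ × [0,kₙ]` lies. -/
noncomputable def cellOf {n : ℕ} (k : Fin n → ℕ)
    (t : ∀ i, Set.Icc (0:ℝ) (k i : ℝ)) : (BoxData k).cell :=
  ⟨fun i => if ((t i : ℝ) = (⌊(t i : ℝ)⌋ : ℤ))
      then ((⌊(t i : ℝ)⌋).toNat, false) else ((⌊(t i : ℝ)⌋).toNat, true), by
    intro i
    have h1 : ⌊(t i : ℝ)⌋ ≤ (k i : ℤ) := by
      have := Int.floor_mono (t i).2.2
      simpa using this
    have h0 : 0 ≤ ⌊(t i : ℝ)⌋ := Int.floor_nonneg.mpr (t i).2.1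
    dsimp only
    split
    · simp only [Bool.false_eq_true, if_false, add_zero]
      omega
    · rename_i h
      have h2 : (t i : ℝ) < (k i : ℝ) := by
        rcases lt_or_eq_of_le (t i).2.2 with h' | h'
        · exact h'
        · exact absurd (by rw [h']; exact_mod_cast (Int.floor_natCast (k i)).symm) h
      have h3 : ⌊(t i : ℝ)⌋ < (k i : ℤ) := by
        rw [Int.floor_lt]
        exact_mod_cast h2
      simp only [if_true]
      omega⟩

/-- The coordinates of `t` inside the open cell of `cellOf k t`: the fractional
parts of the edge coordinates, in order. -/
noncomputable def uOf {n : ℕ} (k : Fin n → ℕ)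
    (t : ∀ i, Set.Icc (0:ℝ) (k i : ℝ)) :
    Fin ((BoxData k).deg (cellOf k t)) → unitInterval :=
  fun m =>
    ⟨Int.fract ((t ((((Finset.univ.filter
          fun i => (((cellOf k t).1 i).2 = true)).orderIsoOfFin rfl) m : _) : Fin n)) : ℝ),
      Int.fract_nonneg _, (Int.fract_lt_one _).le⟩

variable {P Q : PrecubicalSet}

/-- The image of the point of `|⟦0,k₁⟧ ⊗ ⋯ ⊗ ⟦0,kₙ⟧| = [0,k₁] × ⋯ × [0,kₙ]`
with coordinates `t` under the geometric realisation `|ξ|` of a morphism of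
precubical sets `ξ : ⟦0,k₁⟧ ⊗ ⋯ ⊗ ⟦0,kₙ⟧ → P`. -/
noncomputable def realBox {n : ℕ} {k : Fin n → ℕ}
    (ξ : PrecubicalHom (BoxData k) P) (t : ∀ i, Set.Icc (0:ℝ) (k i : ℝ)) :
    P.GeomReal :=
  P.pt (ξ.map (cellOf k t)) (uOf k t ∘ Fin.cast (ξ.deg_map _))

/-- `f : |P| → |Q|` is a weak morphism of precubical sets: it sends vertices to
vertices, and for every morphism of precubical sets
`ξ : ⟦0,k₁⟧ ⊗ ⋯ ⊗ ⟦0,kₙ⟧ → P` there are a morphism of precubical sets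
`χ : ⟦0,l₁⟧ ⊗ ⋯ ⊗ ⟦0,lₙ⟧ → Q` and a dihomeomorphism
`φ : [0,k₁] × ⋯ × [0,kₙ] → [0,l₁] × ⋯ × [0,lₙ]` with `f ∘ |ξ| = |χ| ∘ φ`. -/
def IsWeakMorphism (f : P.GeomReal → Q.GeomReal) : Prop :=
  (∀ v : P.cell, P.deg v = 0 →
      ∃ w : Q.cell, Q.deg w = 0 ∧
        f (P.pt v fun _ => half) = Q.pt w fun _ => half) ∧
  ∀ (n : ℕ) (k : Fin n → ℕ), (∀ i, 1 ≤ k i) →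
    ∀ ξ : PrecubicalHom (BoxData k) P,
      ∃ (l : Fin n → ℕ), (∀ i, 1 ≤ l i) ∧
        ∃ (χ : PrecubicalHom (BoxData l) Q)
          (φ : (∀ i, Set.Icc (0:ℝ) (k i : ℝ)) ≃ₜ (∀ i, Set.Icc (0:ℝ) (l i : ℝ))),
          (∀ s t, s ≤ t ↔ φ s ≤ φ t) ∧
          ∀ t, f (realBox ξ t) = realBox χ (φ t)

/-- `p ∈ P` is the carrier of `a ∈ Q` with respect to `f : |P| → |Q|`: there is
`u` in the open cube with `f([p,u]) = [a,(½,…,½)]`.  (For a weak morphism that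
is a homeomorphism, the carrier of `a` exists and is unique.) -/
def IsCarrier (f : P.GeomReal → Q.GeomReal) (p : P.cell) (a : Q.cell) : Prop :=
  ∃ u : Fin (P.deg p) → unitInterval,
    (∀ j, (u j : ℝ) ∈ Set.Ioo (0:ℝ) 1) ∧
    f (P.pt p u) = Q.pt a fun _ => half

/-- The precubical subset `x♯(⟦0,1⟧^{⊗ deg x})` generated by a cube `x`:
all iterated faces of `x`. -/
def gen (P : PrecubicalSet) (x : P.cell) : Set P.cell :=
  {y | Relation.ReflTransGen
    (fun a c => ∃ (b : Bool) (i : ℕ), 1 ≤ i ∧ i ≤ P.deg c ∧ a = P.d b i c) y x}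

/-- The subset `|X| ⊆ |P|` determined by a precubical subset `X ⊆ P`. -/
def geomSet (P : PrecubicalSet) (X : Set P.cell) : Set P.GeomReal :=
  {z | ∃ x ∈ X, ∃ u, z = P.pt x u}

/-- The carrier `c(A) = ⋃_{a ∈ A} c(a)♯(⟦0,1⟧^{⊗ deg c(a)})` of a precubical
subset `A ⊆ Q`, where `c` is the carrier function of `f`. -/
def carrierSet (c : Q.cell → P.cell) (A : Set Q.cell) : Set P.cell :=
  {p | ∃ a ∈ A, p ∈ P.gen (c a)}

/-- `z` is a top cube of `S`: `z ∈ S` and `z` is not a proper iterated face of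
any element of `S`. -/
def TopCube (P : PrecubicalSet) (S : Set P.cell) (z : P.cell) : Prop :=
  z ∈ S ∧ ∀ x ∈ S, P.deg z < P.deg x → z ∉ P.gen x

/-- An `n`-cube `x ∈ P` is broken in the precubical subset `A ⊆ Q` (with
respect to `f` with carrier function `c`): `x ∈ c(A)` and
`f(x♯(⟦0,1⟧^{⊗n})) ⊄ A` (on geometric realisations). -/
def Broken (f : P.GeomReal → Q.GeomReal) (c : Q.cell → P.cell)
    (A : Set Q.cell) (x : P.cell) : Prop :=
  x ∈ carrierSet c A ∧ ¬ (f '' P.geomSet (P.gen x) ⊆ Q.geomSet A)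

end PrecubicalSet


/-!
A point of `|P|` has a unique representative `[x, u]` with `u` in the open cube: stripping the
boundary coordinates off any representative leaves a face of its cube, and this face is invariant
under the gluing relation (`normalCell`). Hence, for `u` in the open cube, `[x, u] ∈ |S|` iff
`x ∈ S`; with `f [c a, u] = [a, ½]` and injectivity of `f` this gives (i) and (ii). For (iii) it
remains to see that every cube `p` is a carrier: apply the weak-morphism property to `p♯`, and use
that a dihomeomorphism of boxes keeps interior points interior.
-/

namespace PrecubicalSet

variable {P : PrecubicalSet}

/-! A face pattern `w : ℕ → Option Bool` leaves coordinate `j` of a cube free (`none`) or fixes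
it to the boundary value `b` (`some b`). -/

def freeCount (w : ℕ → Option Bool) : ℕ → ℕ
  | 0 => 0
  | k + 1 => freeCount w k + if w k = none then 1 else 0

/-- Coordinates are processed from the bottom: once the first `k` coordinates of `x` are
dealt with, coordinate `k` of `x` has become coordinate `freeCount w k + 1` of the face. -/
def patternFace (P : PrecubicalSet) (w : ℕ → Option Bool) : ℕ → P.cell → P.cell
  | 0, x => x
  | k + 1, x =>
    match w k with
    | none => P.patternFace w k x
    | some b => P.d b (freeCount w k + 1) (P.patternFace w k x)

def insertAt (k : ℕ) (b : Bool) (w : ℕ → Option Bool) (j : ℕ) : Option Bool :=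
  if j < k then w j else if j = k then some b else w (j - 1)

/-- Free coordinates are counted from `1`, like face indices. -/
def fixNthFree (b : Bool) (m : ℕ) (w : ℕ → Option Bool) (j : ℕ) : Option Bool :=
  if w j = none ∧ freeCount w j + 1 = m then some b else w j

lemma patternFace_succ_of_eq_none {w : ℕ → Option Bool} {k : ℕ} (h : w k = none) (x : P.cell) :
    P.patternFace w (k + 1) x = P.patternFace w k x := by
  simp [patternFace, h]

lemma patternFace_succ_of_eq_some {w : ℕ → Option Bool} {k : ℕ} {b : Bool} (h : w k = some b)
    (x : P.cell) :
    P.patternFace w (k + 1) x = P.d b (freeCount w k + 1) (P.patternFace w k x) := by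
  simp [patternFace, h]

lemma freeCount_succ_of_eq_none {w : ℕ → Option Bool} {k : ℕ} (h : w k = none) :
    freeCount w (k + 1) = freeCount w k + 1 := by
  simp [freeCount, h]

lemma freeCount_succ_of_eq_some {w : ℕ → Option Bool} {k : ℕ} {b : Bool} (h : w k = some b) :
    freeCount w (k + 1) = freeCount w k := by
  simp [freeCount, h]

lemma freeCount_le (w : ℕ → Option Bool) (k : ℕ) : freeCount w k ≤ k := by
  induction k with
  | zero => rfl
  | succ k ih => simp only [freeCount]; split_ifs <;> omega

lemma freeCount_congr {w w' : ℕ → Option Bool} {k : ℕ} (h : ∀ j < k, w j = w' j) :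
    freeCount w k = freeCount w' k := by
  induction k with
  | zero => rfl
  | succ k ih =>
    simp only [freeCount, h k k.lt_succ_self, ih fun j hj => h j (by omega)]

lemma patternFace_congr {w w' : ℕ → Option Bool} {k : ℕ} (h : ∀ j < k, w j = w' j) :
    P.patternFace w k = P.patternFace w' k := by
  induction k with
  | zero => rfl
  | succ k ih =>
    funext x
    simp only [patternFace, h k k.lt_succ_self, ih fun j hj => h j (by omega),
      freeCount_congr fun j (hj : j < k) => h j (by omega)]

@[simp]
lemma patternFace_none (k : ℕ) (x : P.cell) : P.patternFace (fun _ => none) k x = x := by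
  induction k with
  | zero => rfl
  | succ k ih => rw [patternFace_succ_of_eq_none rfl, ih]

lemma freeCount_insertAt_of_le (k : ℕ) (b : Bool) (w : ℕ → Option Bool) {j : ℕ} (hj : j ≤ k) :
    freeCount (insertAt k b w) j = freeCount w j :=
  freeCount_congr fun i hi => if_pos (by omega)

lemma freeCount_insertAt (k : ℕ) (b : Bool) (w : ℕ → Option Bool) {m : ℕ} (hkm : k ≤ m) :
    freeCount (insertAt k b w) (m + 1) = freeCount w m := by
  induction m, hkm using Nat.le_induction with
  | base => simp [freeCount, freeCount_insertAt_of_le, insertAt]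
  | succ m hkm ih =>
    rw [freeCount, ih, freeCount]
    simp only [insertAt, if_neg (show ¬ m + 1 < k by omega), if_neg (show m + 1 ≠ k by omega),
      Nat.add_sub_cancel]

lemma freeCount_fixNthFree (b : Bool) (w : ℕ → Option Bool) {m : ℕ} (hm : 1 ≤ m) (k : ℕ) :
    freeCount (fixNthFree b m w) k + (if m ≤ freeCount w k then 1 else 0) = freeCount w k := by
  induction k with
  | zero => simp [freeCount]; omega
  | succ k ih =>
    by_cases hw : w k = none
    · by_cases hkm : freeCount w k + 1 = m
      · simp only [freeCount, fixNthFree, hw, hkm, and_self, if_true, reduceCtorEq, if_false]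
        split_ifs at ih ⊢ <;> omega
      · simp only [freeCount, fixNthFree, hw, hkm, and_false, if_true, if_false]
        split_ifs at ih ⊢ <;> omega
    · simp only [freeCount, fixNthFree, hw, false_and, if_false, add_zero, ih]

section Precubical

variable (hP : P.IsPrecubical)
include hP

lemma deg_patternFace (w : ℕ → Option Bool) {k : ℕ} {x : P.cell} (hk : k ≤ P.deg x) :
    P.deg (P.patternFace w k x) = P.deg x - k + freeCount w k := by
  induction k with
  | zero => rfl
  | succ k ih =>
    have := freeCount_le w k
    cases hw : w k with
    | none =>
      rw [patternFace_succ_of_eq_none hw, freeCount_succ_of_eq_none hw, ih (by omega)]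
      omega
    | some b =>
      rw [patternFace_succ_of_eq_some hw, freeCount_succ_of_eq_some hw,
        hP.1 _ _ _ (by omega) (by rw [ih (by omega)]; omega), ih (by omega)]
      omega

lemma patternFace_mem_gen (w : ℕ → Option Bool) {k : ℕ} {x : P.cell} (hk : k ≤ P.deg x) :
    P.patternFace w k x ∈ P.gen x := by
  induction k with
  | zero => exact Relation.ReflTransGen.refl
  | succ k ih =>
    cases hw : w k with
    | none => rw [patternFace_succ_of_eq_none hw]; exact ih (by omega)
    | some b =>
      rw [patternFace_succ_of_eq_some hw]
      have := freeCount_le w k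
      exact .head ⟨b, freeCount w k + 1, by omega,
        by rw [deg_patternFace hP w (by omega)]; omega, rfl⟩ (ih (by omega))

lemma patternFace_d (w : ℕ → Option Bool) (b : Bool) {k J : ℕ} {y : P.cell} (hkJ : k < J)
    (hJ : J ≤ P.deg y) :
    P.patternFace w k (P.d b J y) = P.d b (J - k + freeCount w k) (P.patternFace w k y) := by
  induction k with
  | zero => rfl
  | succ k ih =>
    have := freeCount_le w k
    have hdy := hP.1 b J y (by omega) hJ
    cases hw : w k with
    | none =>
      rw [patternFace_succ_of_eq_none hw, patternFace_succ_of_eq_none hw,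
        freeCount_succ_of_eq_none hw, ih (by omega)]
      congr 1; omega
    | some c =>
      rw [patternFace_succ_of_eq_some hw, patternFace_succ_of_eq_some hw,
        freeCount_succ_of_eq_some hw, ih (by omega),
        hP.2 c b _ _ _ (by omega) (by omega) (by rw [deg_patternFace hP w (by omega)]; omega)]
      congr 1; omega

lemma patternFace_insertAt (w : ℕ → Option Bool) (b : Bool) {k m : ℕ} {x : P.cell}
    (hkm : k ≤ m) (hm : m + 1 ≤ P.deg x) :
    P.patternFace (insertAt k b w) (m + 1) x = P.patternFace w m (P.d b (k + 1) x) := by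
  induction m, hkm using Nat.le_induction with
  | base =>
    rw [patternFace_succ_of_eq_some (b := b) (by simp [insertAt]),
      freeCount_insertAt_of_le k b w le_rfl,
      patternFace_congr (w := insertAt k b w) (w' := w) fun j hj => if_pos hj,
      patternFace_d hP w b k.lt_succ_self hm]
    congr 1; omega
  | succ m hkm ih =>
    have hw : insertAt k b w (m + 1) = w m := by
      simp only [insertAt, if_neg (show ¬ m + 1 < k by omega), if_neg (show m + 1 ≠ k by omega),
        Nat.add_sub_cancel]
    cases hwm : w m with
    | none =>
      rw [patternFace_succ_of_eq_none (hw.trans hwm), ih (by omega),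
        patternFace_succ_of_eq_none hwm]
    | some c =>
      rw [patternFace_succ_of_eq_some (hw.trans hwm), ih (by omega),
        patternFace_succ_of_eq_some hwm, freeCount_insertAt k b w hkm]

lemma patternFace_fixNthFree (w : ℕ → Option Bool) (b : Bool) {m : ℕ} (hm : 1 ≤ m) {k : ℕ}
    {x : P.cell} (hk : k ≤ P.deg x) :
    P.patternFace (fixNthFree b m w) k x =
      if m ≤ freeCount w k then P.d b m (P.patternFace w k x) else P.patternFace w k x := by
  induction k with
  | zero => simp [patternFace, freeCount]; omega
  | succ k ih =>
    have hcount := freeCount_fixNthFree b w hm k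
    have hdeg := deg_patternFace hP w (x := x) (k := k) (by omega)
    have := freeCount_le w k
    cases hw : w k with
    | none =>
      by_cases hkm : freeCount w k + 1 = m
      · have hfix : fixNthFree b m w k = some b := by simp [fixNthFree, hw, hkm]
        rw [patternFace_succ_of_eq_some hfix, ih (by omega), patternFace_succ_of_eq_none hw,
          freeCount_succ_of_eq_none hw]
        rw [if_neg (show ¬ m ≤ freeCount w k by omega), add_zero] at hcount
        rw [if_neg (show ¬ m ≤ freeCount w k by omega), if_pos (by omega), hcount, hkm]
      · have hfix : fixNthFree b m w k = none := by simp [fixNthFree, hw, hkm]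
        rw [patternFace_succ_of_eq_none hfix, ih (by omega), patternFace_succ_of_eq_none hw,
          freeCount_succ_of_eq_none hw]
        by_cases hmk : m ≤ freeCount w k
        · rw [if_pos hmk, if_pos (by omega)]
        · rw [if_neg hmk, if_neg (by omega)]
    | some c =>
      have hfix : fixNthFree b m w k = some c := by simp [fixNthFree, hw]
      rw [patternFace_succ_of_eq_some hfix, ih (by omega), patternFace_succ_of_eq_some hw,
        freeCount_succ_of_eq_some hw]
      by_cases hmk : m ≤ freeCount w k
      · simp only [hmk, if_true] at hcount ⊢
        rw [hP.2 b c m (freeCount w k + 1) (P.patternFace w k x) hm (by omega) (by omega),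
          Nat.add_sub_cancel, ← hcount]
      · simp only [hmk, if_false, add_zero] at hcount ⊢
        rw [hcount]

end Precubical

def boundaryValue (s : unitInterval) : Option Bool :=
  if s = 0 then some false else if s = 1 then some true else none

def facePattern {m : ℕ} (u : Fin m → unitInterval) (j : ℕ) : Option Bool :=
  if h : j < m then boundaryValue (u ⟨j, h⟩) else none

lemma facePattern_congr_heq {m n : ℕ} (h : m = n) {u : Fin m → unitInterval}
    {v : Fin n → unitInterval} (huv : u ≍ v) : facePattern u = facePattern v := by
  subst h
  rw [eq_of_heq huv]

lemma facePattern_of_forall_mem_Ioo {m : ℕ} {u : Fin m → unitInterval}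
    (hu : ∀ j, (u j : ℝ) ∈ Set.Ioo 0 1) : facePattern u = fun _ => none := by
  funext j
  unfold facePattern boundaryValue
  split_ifs with hj h0 h1 <;> try rfl
  · simpa [h0] using hu ⟨j, hj⟩
  · simpa [h1] using hu ⟨j, hj⟩

lemma facePattern_insCoord {m : ℕ} (b : Bool) {i : ℕ} (hi1 : 1 ≤ i) (hi2 : i ≤ m + 1)
    (u : Fin m → unitInterval) :
    facePattern (insCoord b i u) = insertAt (i - 1) b (facePattern u) := by
  funext j
  simp only [facePattern, insertAt, insCoord]
  by_cases hlt : j < i - 1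
  · simp [hlt, show j < m + 1 by omega, show j + 1 < i by omega, show j < m by omega]
  by_cases heq : j = i - 1
  · subst heq
    cases b <;> simp [boundaryValue, show i - 1 < m + 1 by omega, show i - 1 + 1 = i by omega]
  · by_cases hj : j < m + 1
    · simp [hlt, heq, hj, show ¬ j + 1 < i by omega, show j + 1 ≠ i by omega,
        show j - 1 < m by omega]
    · simp [hlt, heq, hj, show ¬ j - 1 < m by omega]

/-- The cell whose open realisation contains the point `[z]`. -/
def normalCell (z : P.ESpace) : P.cell :=
  P.patternFace (facePattern z.2) (P.deg z.1) z.1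

section Precubical

variable (hP : P.IsPrecubical)
include hP

lemma normalCell_eq_of_relE {a z : P.ESpace} (h : P.RelE a z) : normalCell z = normalCell a := by
  obtain ⟨x, u⟩ := z
  obtain ⟨y, v⟩ := a
  obtain ⟨b, i, hi1, hi2, hy, hvu⟩ := h
  dsimp only at hi2 hy hvu
  subst hy
  have hdeg : P.deg (P.d b i x) + 1 = P.deg x := by have := hP.1 b i x hi1 hi2; omega
  have hu : facePattern u = insertAt (i - 1) b (facePattern v) := by
    rw [← facePattern_insCoord b hi1 (by omega) v]
    exact (facePattern_congr_heq hdeg hvu).symm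
  simp only [normalCell, hu, ← hdeg]
  rw [patternFace_insertAt hP _ b (by omega) (by omega), Nat.sub_add_cancel hi1]

lemma normalCell_eq_of_pt_eq {x y : P.cell} {u : Fin (P.deg x) → unitInterval}
    {v : Fin (P.deg y) → unitInterval} (h : P.pt x u = P.pt y v) :
    normalCell ⟨x, u⟩ = normalCell ⟨y, v⟩ :=
  congrArg (Quot.lift normalCell fun _ _ hr => (normalCell_eq_of_relE hP hr).symm) h

lemma mem_gen_of_pt_eq {x y : P.cell} {u : Fin (P.deg x) → unitInterval}
    {v : Fin (P.deg y) → unitInterval} (h : P.pt x u = P.pt y v)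
    (hu : ∀ j, (u j : ℝ) ∈ Set.Ioo 0 1) : x ∈ P.gen y := by
  have hnormal := normalCell_eq_of_pt_eq hP h
  simp only [normalCell, facePattern_of_forall_mem_Ioo hu, patternFace_none] at hnormal
  rw [hnormal]
  exact patternFace_mem_gen hP _ le_rfl

lemma eq_of_pt_eq {x y : P.cell} {u : Fin (P.deg x) → unitInterval}
    {v : Fin (P.deg y) → unitInterval} (h : P.pt x u = P.pt y v)
    (hu : ∀ j, (u j : ℝ) ∈ Set.Ioo 0 1) (hv : ∀ j, (v j : ℝ) ∈ Set.Ioo 0 1) : x = y := by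
  have hnormal := normalCell_eq_of_pt_eq hP h
  simpa only [normalCell, facePattern_of_forall_mem_Ioo hu, facePattern_of_forall_mem_Ioo hv,
    patternFace_none] using hnormal

end Precubical

lemma gen_subset {X : Set P.cell} (hX : P.IsSub X) {y : P.cell} (hy : y ∈ X) : P.gen y ⊆ X := by
  intro z hz
  induction hz using Relation.ReflTransGen.head_induction_on with
  | refl => exact hy
  | head hface _ ih =>
    obtain ⟨b, i, hi1, hi2, rfl⟩ := hface
    exact hX b i _ hi1 hi2 ih

lemma mem_of_pt_mem_geomSet (hP : P.IsPrecubical) {S : Set P.cell} (hS : P.IsSub S)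
    {x : P.cell} {u : Fin (P.deg x) → unitInterval} (hx : P.pt x u ∈ P.geomSet S)
    (hu : ∀ j, (u j : ℝ) ∈ Set.Ioo 0 1) : x ∈ S := by
  obtain ⟨y, hy, v, h⟩ := hx
  exact gen_subset hS hy (mem_gen_of_pt_eq hP h hu)

/-- The face pattern of a cell `c` of a grid: edge coordinates are free, and a vertex
coordinate `v ∈ {0, 1}` is fixed to the boundary value `v = 1`. -/
def gridPattern {n : ℕ} (c : Fin n → ℕ × Bool) (j : ℕ) : Option Bool :=
  if h : j < n then (if (c ⟨j, h⟩).2 then none else some (decide ((c ⟨j, h⟩).1 = 1))) else none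

lemma card_filter_val_lt_succ {n : ℕ} (p : Fin n → Prop) [DecidablePred p] {k : ℕ} (hk : k < n) :
    (Finset.univ.filter fun i : Fin n => p i ∧ (i : ℕ) < k + 1).card =
      (Finset.univ.filter fun i : Fin n => p i ∧ (i : ℕ) < k).card +
        if p ⟨k, hk⟩ then 1 else 0 := by
  have hsplit : (Finset.univ.filter fun i : Fin n => p i ∧ (i : ℕ) < k + 1) =
      (Finset.univ.filter fun i : Fin n => p i ∧ (i : ℕ) < k) ∪
        (Finset.univ.filter fun i : Fin n => p i ∧ i = ⟨k, hk⟩) := by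
    ext i
    simp only [Finset.mem_union, Finset.mem_filter, Finset.mem_univ, true_and, Fin.ext_iff,
      ← and_or_left]
    exact and_congr_right fun _ => Nat.lt_succ_iff_lt_or_eq
  rw [hsplit, Finset.card_union_of_disjoint (Finset.disjoint_filter.2 fun i _ h1 h2 => by
    rw [h2.2] at h1; exact lt_irrefl k h1.2)]
  congr 1
  split_ifs with hp
  · exact Finset.card_eq_one.2 ⟨⟨k, hk⟩, by ext i; simpa using fun h => h ▸ hp⟩
  · exact Finset.card_eq_zero.2 (Finset.filter_eq_empty_iff.2 fun i _ h => hp (h.2 ▸ h.1))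

lemma freeCount_gridPattern {n : ℕ} (c : Fin n → ℕ × Bool) {k : ℕ} (hk : k ≤ n) :
    freeCount (gridPattern c) k =
      (Finset.univ.filter fun i : Fin n => (c i).2 = true ∧ (i : ℕ) < k).card := by
  induction k with
  | zero => simp [freeCount]
  | succ k ih =>
    rw [card_filter_val_lt_succ _ (by omega), ← ih (by omega), freeCount]
    simp [gridPattern, show k < n by omega]

lemma gridDeg_eq_freeCount {n : ℕ} (c : Fin n → ℕ × Bool) :
    gridDeg c = freeCount (gridPattern c) n := by
  rw [freeCount_gridPattern c le_rfl, gridDeg]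
  simp

lemma gridPattern_gridD {n : ℕ} (c : Fin n → ℕ × Bool) (hc : ∀ i, (c i).2 = true → (c i).1 = 0)
    (b : Bool) (m : ℕ) {j : ℕ} (hj : j < n) :
    gridPattern (gridD b m c) j = fixNthFree b m (gridPattern c) j := by
  have hcount : (Finset.univ.filter fun i => (c i).2 = true ∧ i < ⟨j, hj⟩).card =
      freeCount (gridPattern c) j := by
    rw [freeCount_gridPattern c hj.le]
    simp only [Fin.lt_def]
  by_cases he : (c ⟨j, hj⟩).2 = true
  · simp only [gridPattern, gridD, fixNthFree, hj, he, hc _ he, hcount, dif_pos, true_and, if_true]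
    split_ifs <;> cases b <;> simp_all
  · simp [gridPattern, gridD, fixNthFree, hj, he]

/-- The morphism `p♯ : ⟦0,1⟧^{⊗ deg p} → P`. -/
def charHom (hP : P.IsPrecubical) (p : P.cell) :
    PrecubicalHom (BoxData fun _ : Fin (P.deg p) => 1) P where
  map x := P.patternFace (gridPattern x.1) (P.deg p) p
  deg_map x := by
    rw [deg_patternFace hP _ le_rfl, Nat.sub_self, zero_add]
    exact (gridDeg_eq_freeCount x.1).symm
  d_map b j x hj1 hj2 := by
    have hedge : ∀ i, (x.1 i).2 = true → (x.1 i).1 = 0 := fun i he => by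
      simpa [he] using x.2 i
    show P.patternFace (gridPattern (gridD b j x.1)) (P.deg p) p = _
    rw [patternFace_congr fun i hi => gridPattern_gridD x.1 hedge b j hi,
      patternFace_fixNthFree hP _ b hj1 le_rfl, if_pos ((gridDeg_eq_freeCount x.1) ▸ hj2)]

lemma charHom_map_of_forall_edge (hP : P.IsPrecubical) (p : P.cell)
    {x : (BoxData fun _ : Fin (P.deg p) => 1).cell} (hx : ∀ i, (x.1 i).2 = true) :
    (charHom hP p).map x = p := by
  have : gridPattern x.1 = fun _ => none := by
    funext j
    simp only [gridPattern]
    split_ifs <;> simp_all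
  simp only [charHom, this, patternFace_none]

end PrecubicalSet

lemma not_isOpen_singleton_Icc {r : ℝ} (hr : 0 < r) (s : Set.Icc (0 : ℝ) r) :
    ¬ IsOpen ({s} : Set (Set.Icc (0 : ℝ) r)) := by
  have : Fact ((0 : ℝ) ≤ r) := ⟨hr.le⟩
  have : Nontrivial (Set.Icc (0 : ℝ) r) :=
    ⟨⟨⟨0, le_rfl, hr.le⟩, ⟨r, hr.le, le_rfl⟩, fun h => hr.ne (congrArg Subtype.val h)⟩⟩
  exact not_isOpen_singleton s

namespace Homeomorph

variable {ι : Type*} [Finite ι] {k l : ι → ℝ}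

/-- An order-homeomorphism between boxes is strictly monotone in each coordinate: otherwise it
would map the open box between `a` and `x` into a hyperplane `{w | w i = const}`. -/
lemma apply_lt_apply_of_forall_lt (hl : ∀ i, 0 < l i)
    (φ : (∀ i, Set.Icc (0 : ℝ) (k i)) ≃ₜ (∀ i, Set.Icc (0 : ℝ) (l i)))
    (hφ : ∀ s t, s ≤ t ↔ φ s ≤ φ t) {a x : ∀ i, Set.Icc (0 : ℝ) (k i)}
    (hax : ∀ j, (a j : ℝ) < x j) (i : ι) : (φ a i : ℝ) < φ x i := by
  by_contra! hxa
  set U : Set (∀ j, Set.Icc (0 : ℝ) (k j)) := {u | ∀ j, (a j : ℝ) < u j ∧ (u j : ℝ) < x j}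
  have hU : IsOpen U := by
    have hcoord (j : ι) : Continuous fun u : ∀ j, Set.Icc (0 : ℝ) (k j) => (u j : ℝ) :=
      continuous_subtype_val.comp (continuous_apply j)
    simp only [U, Set.ofPred_forall]
    exact isOpen_iInter_of_finite fun j =>
      (isOpen_lt continuous_const (hcoord j)).inter (isOpen_lt (hcoord j) continuous_const)
  let mid : ∀ j, Set.Icc (0 : ℝ) (k j) := fun j =>
    ⟨((a j : ℝ) + x j) / 2, by linarith [(a j).2.1, (x j).2.1], by linarith [(a j).2.2, (x j).2.2]⟩
  have hmid : mid ∈ U := fun j => by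
    simp only [mid]
    constructor <;> linarith [hax j]
  have hconst : ∀ u ∈ U, φ u i = φ a i := fun u hu =>
    le_antisymm (((hφ u x).1 fun j => (hu j).2.le) i |>.trans (Subtype.coe_le_coe.mp hxa))
      (((hφ a u).1 fun j => (hu j).1.le) i)
  have himage : (fun w => w i) '' (φ '' U) = {φ a i} := by
    refine Set.eq_singleton_iff_unique_mem.mpr ⟨⟨φ mid, ⟨mid, hmid, rfl⟩, hconst mid hmid⟩, ?_⟩
    rintro _ ⟨_, ⟨u, hu, rfl⟩, rfl⟩
    exact hconst u hu
  exact not_isOpen_singleton_Icc (hl i) _ (himage ▸ isOpenMap_eval i _ (φ.isOpenMap U hU))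

lemma apply_mem_Ioo_of_forall_mem_Ioo (hl : ∀ i, 0 < l i)
    (φ : (∀ i, Set.Icc (0 : ℝ) (k i)) ≃ₜ (∀ i, Set.Icc (0 : ℝ) (l i)))
    (hφ : ∀ s t, s ≤ t ↔ φ s ≤ φ t) {x : ∀ i, Set.Icc (0 : ℝ) (k i)}
    (hx : ∀ j, (x j : ℝ) ∈ Set.Ioo 0 (k j)) (i : ι) : (φ x i : ℝ) ∈ Set.Ioo 0 (l i) := by
  let below : ∀ j, Set.Icc (0 : ℝ) (k j) := fun j =>
    ⟨(x j : ℝ) / 2, by linarith [(hx j).1], by linarith [(hx j).1, (hx j).2]⟩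
  let above : ∀ j, Set.Icc (0 : ℝ) (k j) := fun j =>
    ⟨((x j : ℝ) + k j) / 2, by linarith [(hx j).1, (hx j).2], by linarith [(hx j).2]⟩
  exact ⟨(φ below i).2.1.trans_lt
      (φ.apply_lt_apply_of_forall_lt hl hφ (fun j => by simp only [below]; linarith [(hx j).1]) i),
    (φ.apply_lt_apply_of_forall_lt hl hφ (fun j => by simp only [above]; linarith [(hx j).2]) i
      ).trans_le (φ above i).2.2⟩

end Homeomorph

namespace PrecubicalSet

variable {P Q : PrecubicalSet}

lemma cellOf_snd_eq_true_iff {n : ℕ} {k : Fin n → ℕ} (t : ∀ i, Set.Icc (0 : ℝ) (k i))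
    (i : Fin n) :
    ((cellOf k t).1 i).2 = true ↔ (t i : ℝ) ≠ ⌊(t i : ℝ)⌋ := by
  show (if (t i : ℝ) = (⌊(t i : ℝ)⌋ : ℤ) then ((⌊(t i : ℝ)⌋).toNat, false)
    else ((⌊(t i : ℝ)⌋).toNat, true)).2 = true ↔ _
  split_ifs with h
  · exact ⟨False.elim, fun hne => (hne h).elim⟩
  · exact ⟨fun _ => h, fun _ => rfl⟩

lemma cellOf_snd_eq_true_of_mem_Ioo {n : ℕ} {k : Fin n → ℕ} (t : ∀ i, Set.Icc (0 : ℝ) (k i))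
    {i : Fin n} (hi : (t i : ℝ) ∈ Set.Ioo 0 1) : ((cellOf k t).1 i).2 = true := by
  rw [cellOf_snd_eq_true_iff, Int.floor_eq_zero_iff.mpr ⟨hi.1.le, hi.2⟩]
  exact_mod_cast hi.1.ne'

lemma uOf_mem_Ioo {n : ℕ} (k : Fin n → ℕ) (t : ∀ i, Set.Icc (0 : ℝ) (k i))
    (m : Fin ((BoxData k).deg (cellOf k t))) : (uOf k t m : ℝ) ∈ Set.Ioo 0 1 := by
  have hedge := (Finset.mem_filter.mp
    ((Finset.univ.filter fun i => ((cellOf k t).1 i).2 = true).orderIsoOfFin rfl m).2).2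
  rw [cellOf_snd_eq_true_iff] at hedge
  exact ⟨(Int.fract_nonneg _).lt_of_ne fun h => hedge (sub_eq_zero.mp h.symm),
    Int.fract_lt_one _⟩

lemma uOf_eq_half {n : ℕ} (k : Fin n → ℕ) {t : ∀ i, Set.Icc (0 : ℝ) (k i)}
    (ht : ∀ i, (t i : ℝ) = 1 / 2) : uOf k t = fun _ => half := by
  funext m
  apply Subtype.ext
  simp only [uOf, ht, half]
  exact Int.fract_eq_self.mpr ⟨by norm_num, by norm_num⟩

/-- The centre `(½, …, ½)` of the first cube of the subdivision `χ` of `f ∘ |p♯|` pulls back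
under the dihomeomorphism into the open cube `p`, so `p` is the carrier of that cube. -/
lemma exists_carrier_eq (hP : P.IsPrecubical) {f : P.GeomReal → Q.GeomReal}
    (hinj : Function.Injective f) (hf : IsWeakMorphism f) {c : Q.cell → P.cell}
    (hc : ∀ a, IsCarrier f (c a) a) (p : P.cell) : ∃ a, c a = p := by
  obtain ⟨l, hl, χ, φ, hφ, hfφ⟩ := hf.2 _ (fun _ => 1) (fun _ => le_rfl) (charHom hP p)
  have hl' (i) : (1 : ℝ) ≤ l i := by exact_mod_cast hl i
  let centre : ∀ i, Set.Icc (0 : ℝ) (l i) := fun i => ⟨1 / 2, by norm_num, by linarith [hl' i]⟩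
  have hcentre : ∀ i, (centre i : ℝ) ∈ Set.Ioo 0 (l i : ℝ) := fun i =>
    ⟨by norm_num [centre], by simp only [centre]; linarith [hl' i]⟩
  have hφsymm : ∀ s t, s ≤ t ↔ φ.symm s ≤ φ.symm t := fun s t => by
    simpa only [φ.apply_symm_apply] using (hφ (φ.symm s) (φ.symm t)).symm
  have hpre : ∀ i, (φ.symm centre i : ℝ) ∈ Set.Ioo 0 1 := fun i => by
    simpa using φ.symm.apply_mem_Ioo_of_forall_mem_Ioo (fun _ => by norm_num) hφsymm hcentre i
  obtain ⟨u, hu, hfu⟩ := hc (χ.map (cellOf l centre))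
  refine ⟨χ.map (cellOf l centre), ?_⟩
  have himage : f (realBox (charHom hP p) (φ.symm centre)) = f (P.pt (c _) u) := by
    rw [hfφ, φ.apply_symm_apply, hfu, realBox, uOf_eq_half l fun _ => rfl]
    rfl
  have hcell := eq_of_pt_eq hP (hinj himage) (fun j => uOf_mem_Ioo _ _ _) hu
  rw [charHom_map_of_forall_edge hP p fun i => cellOf_snd_eq_true_of_mem_Ioo _ (hpre i)] at hcell
  exact hcell.symm

section Carrier

variable {f : P.GeomReal → Q.GeomReal} {X : Set P.cell} {F : Set Q.cell} {p : P.cell}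
  {a : Q.cell}

lemma mem_of_carrier_mem (hQ : Q.IsPrecubical) (hF : Q.IsSub F)
    (himage : f '' P.geomSet X ⊆ Q.geomSet F) (hp : IsCarrier f p a) (hpX : p ∈ X) : a ∈ F := by
  obtain ⟨u, -, hfu⟩ := hp
  refine mem_of_pt_mem_geomSet hQ hF (u := fun _ => half) ?_
    fun _ => ⟨by norm_num [half], by norm_num [half]⟩
  exact hfu ▸ himage ⟨_, ⟨p, hpX, u, rfl⟩, rfl⟩

lemma carrier_mem_of_mem (hP : P.IsPrecubical) (hX : P.IsSub X) (hinj : Function.Injective f)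
    (himage : Q.geomSet F ⊆ f '' P.geomSet X) (hp : IsCarrier f p a) (ha : a ∈ F) : p ∈ X := by
  obtain ⟨u, hu, hfu⟩ := hp
  obtain ⟨z, hz, hfz⟩ := himage ⟨a, ha, _, rfl⟩
  rw [hinj (hfz.trans hfu.symm)] at hz
  exact mem_of_pt_mem_geomSet hP hX hz hu

end Carrier

end PrecubicalSet

open PrecubicalSet in
theorem carrier_image_properties_general (P Q : PrecubicalSet)
    (hP : P.IsPrecubical) (hQ : Q.IsPrecubical)
    (f : P.GeomReal ≃ₜ Q.GeomReal) (hf : IsWeakMorphism (P := P) (Q := Q) f)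
    (c : Q.cell → P.cell) (hc : ∀ a, IsCarrier (P := P) (Q := Q) f (c a) a)
    (X : Set P.cell) (hX : P.IsSub X) (A : Set Q.cell)
    (FX : Set Q.cell) (hFX : Q.IsSub FX)
    (hFXim : f '' P.geomSet X = Q.geomSet FX)
    (B : Set Q.cell) (hB : Q.IsSub B)
    (hBim : f '' P.geomSet (carrierSet c A) = Q.geomSet B) :
    (∀ a : Q.cell, a ∈ FX ↔ c a ∈ X) ∧
      A ⊆ B ∧
      carrierSet c FX = X := by
  have hmem (a : Q.cell) : a ∈ FX ↔ c a ∈ X :=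
    ⟨carrier_mem_of_mem hP hX f.injective hFXim.ge (hc a),
      mem_of_carrier_mem hQ hFX hFXim.le (hc a)⟩
  refine ⟨hmem, fun a ha => mem_of_carrier_mem hQ hB hBim.le (hc a) ⟨a, ha, .refl⟩, ?_⟩
  apply Set.Subset.antisymm
  · rintro p ⟨a, ha, hp⟩
    exact gen_subset hX ((hmem a).1 ha) hp
  · intro p hp
    obtain ⟨a, rfl⟩ := exists_carrier_eq hP f.injective hf hc p
    exact ⟨a, (hmem a).2 hp, .refl⟩

open PrecubicalSet in
/-- Let `f : |P| → |Q|` be a weak morphism of precubical sets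
that is a homeomorphism, `X ⊆ P` and `A ⊆ Q` precubical subsets and `a ∈ Q`.
With `c` the carrier function of `f` and `f(X)` the image precubical subset
(the unique precubical subset with `f(|X|) = |f(X)|`, here given by `FX`, resp.
`B` for `f(c(A))`): (i) `a ∈ f(X) ↔ c(a) ∈ X`; (ii) `A ⊆ f(c(A))`;
(iii) `c(f(X)) = X`. -/
theorem carrier_image_properties (P Q : PrecubicalSet)
    (hP : P.IsPrecubical) (hQ : Q.IsPrecubical)
    (f : P.GeomReal ≃ₜ Q.GeomReal) (hf : IsWeakMorphism (P := P) (Q := Q) f)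
    (c : Q.cell → P.cell) (hc : ∀ a, IsCarrier (P := P) (Q := Q) f (c a) a)
    (X : Set P.cell) (hX : P.IsSub X) (A : Set Q.cell) (hA : Q.IsSub A)
    (FX : Set Q.cell) (hFX : Q.IsSub FX)
    (hFXim : f '' P.geomSet X = Q.geomSet FX)
    (B : Set Q.cell) (hB : Q.IsSub B)
    (hBim : f '' P.geomSet (carrierSet c A) = Q.geomSet B) :
    (∀ a : Q.cell, a ∈ FX ↔ c a ∈ X) ∧
      A ⊆ B ∧
      carrierSet c FX = X :=
  carrier_image_properties_general P Q hP hQ f hf c hc X hX A FX hFX hFXim B hB hBim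
end
end

section
/- Let f : |P| → |Q| be a weak morphism of precubical sets that is a homeomorphism and A ⊆ Q a finite precubical subset. If some element of P is broken in A, then there exists a top cube of c(A) that is broken in A; moreover any top cube of c(A) that is broken in A has degree > 0. -/
open CategoryTheory

noncomputable section
open scoped Classical DirectSum

namespace PrecubicalSet

variable {P Q : PrecubicalSet}

theorem mem_gen_self (x : P.cell) : x ∈ P.gen x :=
  Relation.ReflTransGen.refl

theorem gen_subset_gen {x y : P.cell} (h : y ∈ P.gen x) : P.gen y ⊆ P.gen x :=
  fun _ hz => hz.trans h

theorem deg_le_of_mem_gen (hP : P.IsPrecubical) {y z : P.cell} (h : y ∈ P.gen z) :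
    P.deg y ≤ P.deg z := by
  induction h using Relation.ReflTransGen.head_induction_on with
  | refl => exact le_rfl
  | head hface _ ih =>
    obtain ⟨b, i, hi1, hi2, rfl⟩ := hface
    rw [hP.1 b i _ hi1 hi2]
    omega

theorem eq_of_mem_gen_of_deg_eq_zero {y z : P.cell} (h : y ∈ P.gen z) (hz : P.deg z = 0) :
    y = z := by
  rcases Relation.ReflTransGen.cases_tail h with rfl | ⟨_, _, _, _, hi1, hi2, _⟩
  · rfl
  · omega

theorem geomSet_mono {X Y : Set P.cell} (h : X ⊆ Y) : P.geomSet X ⊆ P.geomSet Y :=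
  fun _ ⟨x, hx, u, hu⟩ => ⟨x, h hx, u, hu⟩

theorem bddAbove_deg_carrierSet (hP : P.IsPrecubical) (c : Q.cell → P.cell)
    {A : Set Q.cell} (hA : A.Finite) : BddAbove (P.deg '' carrierSet c A) := by
  obtain ⟨M, hM⟩ := (hA.image fun a => P.deg (c a)).bddAbove
  refine ⟨M, ?_⟩
  rintro _ ⟨p, ⟨a, ha, hp⟩, rfl⟩
  exact (deg_le_of_mem_gen hP hp).trans (hM ⟨a, ha, rfl⟩)

/-- A cube of maximal degree among those of `S` containing `x` as an iterated face is a
top cube of `S`. -/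
theorem exists_topCube_of_mem {S : Set P.cell} (hS : BddAbove (P.deg '' S)) {x : P.cell}
    (hx : x ∈ S) : ∃ z, TopCube P S z ∧ x ∈ P.gen z := by
  have hbdd : BddAbove (P.deg '' {z ∈ S | x ∈ P.gen z}) :=
    hS.mono (Set.image_mono fun _ hz => hz.1)
  obtain ⟨_, ⟨z, ⟨hzS, hxz⟩, rfl⟩, hmax⟩ :=
    hbdd.exists_isGreatest_of_nonempty ⟨_, x, ⟨hx, mem_gen_self x⟩, rfl⟩
  refine ⟨z, ⟨hzS, fun w hwS hlt hzw => ?_⟩, hxz⟩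
  have := hmax ⟨w, ⟨hwS, gen_subset_gen hzw hxz⟩, rfl⟩
  omega

theorem Broken.of_mem_gen {f : P.GeomReal → Q.GeomReal} {c : Q.cell → P.cell}
    {A : Set Q.cell} {x z : P.cell} (hx : Broken f c A x) (hz : z ∈ carrierSet c A)
    (hxz : x ∈ P.gen z) : Broken f c A z :=
  ⟨hz, fun hsub => hx.2 ((Set.image_mono (geomSet_mono (gen_subset_gen hxz))).trans hsub)⟩

theorem TopCube.exists_eq_carrier_of_deg_eq_zero {c : Q.cell → P.cell} {A : Set Q.cell}
    {z : P.cell} (hz : TopCube P (carrierSet c A) z) (hz0 : P.deg z = 0) :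
    ∃ a ∈ A, z = c a := by
  obtain ⟨a, ha, hza⟩ := hz.1
  have hca : P.deg (c a) = 0 := by
    by_contra hca
    exact hz.2 (c a) ⟨a, ha, mem_gen_self _⟩ (by omega) hza
  exact ⟨a, ha, eq_of_mem_gen_of_deg_eq_zero hza hca⟩

/-- A vertex carrying `a` is sent to the vertex `a` itself: its only point is the one
with empty coordinates, and that is the point witnessing the carrier. -/
theorem image_geomSet_gen_subset_of_isCarrier {f : P.GeomReal → Q.GeomReal} {p : P.cell}
    {a : Q.cell} {A : Set Q.cell} (hp : IsCarrier f p a) (hp0 : P.deg p = 0) (ha : a ∈ A) :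
    f '' P.geomSet (P.gen p) ⊆ Q.geomSet A := by
  rintro _ ⟨_, ⟨y, hy, u, rfl⟩, rfl⟩
  obtain rfl := eq_of_mem_gen_of_deg_eq_zero hy hp0
  obtain ⟨u₀, -, hfu⟩ := hp
  obtain rfl : u = u₀ := funext fun j => absurd j.isLt (by omega)
  exact ⟨a, ha, _, hfu⟩

end PrecubicalSet

open PrecubicalSet in
theorem broken_top_cube_general (P Q : PrecubicalSet)
    (hP : P.IsPrecubical)
    (f : P.GeomReal ≃ₜ Q.GeomReal)
    (c : Q.cell → P.cell) (hc : ∀ a, IsCarrier (P := P) (Q := Q) f (c a) a)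
    (A : Set Q.cell) (hfin : A.Finite)
    (hbr : ∃ x : P.cell, Broken (P := P) (Q := Q) f c A x) :
    (∃ z : P.cell, TopCube P (carrierSet c A) z ∧
        Broken (P := P) (Q := Q) f c A z) ∧
      ∀ z : P.cell, TopCube P (carrierSet c A) z →
        Broken (P := P) (Q := Q) f c A z → 0 < P.deg z := by
  refine ⟨?_, fun z hz hbz => Nat.pos_of_ne_zero fun hz0 => ?_⟩
  · obtain ⟨x, hx⟩ := hbr
    obtain ⟨z, hz, hxz⟩ := exists_topCube_of_mem (bddAbove_deg_carrierSet hP c hfin) hx.1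
    exact ⟨z, hz, hx.of_mem_gen hz.1 hxz⟩
  · obtain ⟨a, ha, rfl⟩ := hz.exists_eq_carrier_of_deg_eq_zero hz0
    exact hbz.2 (image_geomSet_gen_subset_of_isCarrier (hc a) hz0 ha)

open PrecubicalSet in
/-- Let `f : |P| → |Q|` be a weak morphism of precubical sets
that is a homeomorphism, with carrier function `c`, and let `A ⊆ Q` be a finite
precubical subset. If some element of `P` is broken in `A`, then some top cube
of `c(A)` is broken in `A`; moreover any top cube of `c(A)` that is broken in
`A` has degree `> 0`. -/
theorem broken_top_cube (P Q : PrecubicalSet)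
    (hP : P.IsPrecubical) (hQ : Q.IsPrecubical)
    (f : P.GeomReal ≃ₜ Q.GeomReal) (hf : IsWeakMorphism (P := P) (Q := Q) f)
    (c : Q.cell → P.cell) (hc : ∀ a, IsCarrier (P := P) (Q := Q) f (c a) a)
    (A : Set Q.cell) (hA : Q.IsSub A) (hfin : A.Finite)
    (hbr : ∃ x : P.cell, Broken (P := P) (Q := Q) f c A x) :
    (∃ z : P.cell, TopCube P (carrierSet c A) z ∧
        Broken (P := P) (Q := Q) f c A z) ∧
      ∀ z : P.cell, TopCube P (carrierSet c A) z →
        Broken (P := P) (Q := Q) f c A z → 0 < P.deg z :=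
  broken_top_cube_general P Q hP f c hc A hfin hbr
end
end
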